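/- Let D > 0. Let R(x, t) > 0 be C¹, let V_x, V_r be C¹ functions of (x, r, t) for 0 ≤ r ≤ R(x, t) satisfying the incompressibility condition ∂_r(r V_r) + r ∂_x V_x = 0 and the streamline condition ∂_t R + V_x(x, R, t) ∂_x R = V_r(x, R, t). Set Ṽ_x := V_x − ⟨V_x⟩, let η(x, r, t) be C¹ in (x, t), C² in r, set η̃ := η − ⟨η⟩, and let c₁(x, t) be C¹ and G₂(x, t) be continuous. Suppose there exists W₂(x, r, t), C² in r on (0, R], with r ∂_r W₂ → 0 as r → 0⁺ and ∂_r W₂(x, R, t) = 0, such that D(∂²_r W₂ + (1/r) ∂_r W₂) = ∂_t(c₁ η̃) + G₂ − η̃ ∂_x(c₁ ⟨V_x⟩) + V_x ∂_x(c₁ η̃) + V_r c₁ ∂_r η̃ for 0 < r < R(x, t). Then G₂(x, t) = −(1/R²) ∂_x ( c₁ ⟨R² η Ṽ_x⟩ ), where for fixed (x, t), ⟨R² η Ṽ_x⟩ = 2 ∫₀ᴿ η(x, r, t) Ṽ_x(x, r, t) r dr. -/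

import Mathlib

open Set Filter Topology

/-- The radial average over a cross section of radius `R(x,t)`:
`⟨f⟩(x,t) = (2/R(x,t)²) ∫₀^{R(x,t)} f(x,r,t) r dr`. -/
noncomputable def avgR (R : ℝ → ℝ → ℝ) (f : ℝ → ℝ → ℝ → ℝ) (x t : ℝ) : ℝ :=
  (2 / (R x t) ^ 2) * ∫ r in (0:ℝ)..(R x t), f x r t * r

/-!
Multiply the equation for `W₂` by `r` and integrate over the cross section: the left side is
`D [r ∂ᵣW₂]₀^R = 0` by the two boundary conditions. On the right, the term in `∂ₓ(c₁⟨Vₓ⟩)` drops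
out because `η̃` has zero mean, and with `u = c₁ η̃` the transport terms `∂ₜu + Vₓ ∂ₓu + Vᵣ ∂ᵣu`
integrate to `∂ₓ ∫₀ᴿ u Vₓ r dr`. For this, differentiate the integrals over the moving cross
section (Leibniz rule; `∫₀ᴿ u r dr` vanishes identically in `t`), turn the stretching term
`u ∂ₓVₓ r = -u ∂ᵣ(r Vᵣ)` into `Vᵣ ∂ᵣu r` by parts, and the streamline condition cancels the
boundary terms at `r = R`. Finally `∫₀ᴿ η̃ Vₓ r dr = ∫₀ᴿ η Ṽₓ r dr`.
-/

open Function intervalIntegral MeasureTheory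

section PartialDeriv

variable {G : ℝ → ℝ → ℝ}

theorem ContDiff.hasDerivAt_fderiv_fst (hG : ContDiff ℝ 1 (uncurry G)) (x y : ℝ) :
    HasDerivAt (G · y) (fderiv ℝ (uncurry G) (x, y) (1, 0)) x :=
  (((hG.differentiable one_ne_zero (x, y)).hasFDerivAt).comp_hasDerivAt x
    ((hasDerivAt_id x).prodMk (hasDerivAt_const x y)) :)

theorem ContDiff.hasDerivAt_deriv_fst (hG : ContDiff ℝ 1 (uncurry G)) (x y : ℝ) :
    HasDerivAt (G · y) (deriv (G · y) x) x :=
  (hG.hasDerivAt_fderiv_fst x y).differentiableAt.hasDerivAt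

theorem ContDiff.continuous_deriv_fst (hG : ContDiff ℝ 1 (uncurry G)) :
    Continuous (uncurry fun x y => deriv (G · y) x) := by
  have h : (uncurry fun x y => deriv (G · y) x) = fun p => fderiv ℝ (uncurry G) p (1, 0) :=
    funext fun p => (hG.hasDerivAt_fderiv_fst p.1 p.2).deriv
  rw [h]
  exact (hG.continuous_fderiv one_ne_zero).clm_apply continuous_const

theorem ContDiff.uncurry_flip (hG : ContDiff ℝ 1 (uncurry G)) :
    ContDiff ℝ 1 (uncurry (flip G)) :=
  hG.comp (contDiff_snd.prodMk contDiff_fst)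

theorem ContDiff.continuous_deriv_snd (hG : ContDiff ℝ 1 (uncurry G)) :
    Continuous (uncurry fun x y => deriv (G x) y) :=
  hG.uncurry_flip.continuous_deriv_fst.comp continuous_swap

theorem ContDiff.continuous_deriv_fst_apply (hG : ContDiff ℝ 1 (uncurry G)) (x : ℝ) :
    Continuous fun y => deriv (G · y) x :=
  hG.continuous_deriv_fst.comp (continuous_const.prodMk continuous_id)

theorem ContDiff.continuous_deriv_snd_apply (hG : ContDiff ℝ 1 (uncurry G)) (x : ℝ) :
    Continuous fun y => deriv (G x) y :=
  hG.continuous_deriv_snd.comp (continuous_const.prodMk continuous_id)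

end PartialDeriv

section Leibniz

variable {G G₁ : ℝ → ℝ → ℝ}

theorem hasDerivAt_intervalIntegral_param (hG : Continuous (uncurry G))
    (hG₁ : Continuous (uncurry G₁)) (hGG₁ : ∀ x y, HasDerivAt (G · y) (G₁ x y) x)
    (a b x₀ : ℝ) :
    HasDerivAt (fun x => ∫ r in a..b, G x r) (∫ r in a..b, G₁ x₀ r) x₀ := by
  obtain ⟨C, hC⟩ : ∃ C, ∀ p ∈ Metric.closedBall x₀ 1 ×ˢ uIcc a b, ‖uncurry G₁ p‖ ≤ C :=
    ((isCompact_closedBall x₀ 1).prod isCompact_uIcc).exists_bound_of_continuousOn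
      hG₁.continuousOn
  refine (hasDerivAt_integral_of_dominated_loc_of_deriv_le (bound := fun _ => C)
    (Metric.ball_mem_nhds x₀ one_pos) ?_ ?_ ?_ ?_ intervalIntegrable_const ?_).2
  · exact Eventually.of_forall fun x => (hG.comp (Continuous.prodMk_right x)).aestronglyMeasurable
  · exact (hG.comp (Continuous.prodMk_right x₀)).intervalIntegrable a b
  · exact (hG₁.comp (Continuous.prodMk_right x₀)).aestronglyMeasurable
  · exact Eventually.of_forall fun r hr x hx =>
      hC (x, r) ⟨Metric.ball_subset_closedBall hx, uIoc_subset_uIcc hr⟩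
  · exact Eventually.of_forall fun r _ x _ => hGG₁ x r

theorem hasStrictFDerivAt_intervalIntegral_param_upper (hG : Continuous (uncurry G))
    (hG₁ : Continuous (uncurry G₁)) (hGG₁ : ∀ x y, HasDerivAt (G · y) (G₁ x y) x)
    (a : ℝ) (p : ℝ × ℝ) :
    HasStrictFDerivAt (fun q : ℝ × ℝ => ∫ r in a..q.2, G q.1 r)
      ((ContinuousLinearMap.toSpanSingleton ℝ (∫ r in a..p.2, G₁ p.1 r)).coprod
        (ContinuousLinearMap.toSpanSingleton ℝ (G p.1 p.2))) p := by
  refine hasStrictFDerivAt_uncurry_coprod (f := fun x y => ∫ r in a..y, G x r)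
    (f₁ := fun x y => ContinuousLinearMap.toSpanSingleton ℝ (∫ r in a..y, G₁ x r))
    (f₂ := fun x y => ContinuousLinearMap.toSpanSingleton ℝ (G x y)) ?_ ?_ ?_ ?_
  · exact Eventually.of_forall fun q =>
      (hasDerivAt_intervalIntegral_param hG hG₁ hGG₁ a q.2 q.1).hasFDerivAt
  · exact Eventually.of_forall fun q =>
      ((hG.comp (Continuous.prodMk_right q.1)).integral_hasStrictDerivAt a q.2).hasDerivAt
        |>.hasFDerivAt
  · exact (ContinuousLinearMap.toSpanSingletonCLE.continuous.comp
      (continuous_parametric_primitive_of_continuous hG₁)).continuousAt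
  · exact (ContinuousLinearMap.toSpanSingletonCLE.continuous.comp hG).continuousAt

theorem hasDerivAt_intervalIntegral_param_upper (hG : Continuous (uncurry G))
    (hG₁ : Continuous (uncurry G₁)) (hGG₁ : ∀ x y, HasDerivAt (G · y) (G₁ x y) x)
    (a : ℝ) {ρ : ℝ → ℝ} {ρ' x₀ : ℝ} (hρ : HasDerivAt ρ ρ' x₀) :
    HasDerivAt (fun x => ∫ r in a..ρ x, G x r)
      ((∫ r in a..ρ x₀, G₁ x₀ r) + G x₀ (ρ x₀) * ρ') x₀ := by
  have h := (hasStrictFDerivAt_intervalIntegral_param_upper hG hG₁ hGG₁ a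
    (x₀, ρ x₀)).hasFDerivAt.comp_hasDerivAt x₀ ((hasDerivAt_id x₀).prodMk hρ)
  exact h.congr_deriv (by simp [mul_comm])

theorem contDiff_intervalIntegral_param_upper (hG : Continuous (uncurry G))
    (hG₁ : Continuous (uncurry G₁)) (hGG₁ : ∀ x y, HasDerivAt (G · y) (G₁ x y) x)
    (a : ℝ) {ρ : ℝ → ℝ} (hρ : ContDiff ℝ 1 ρ) :
    ContDiff ℝ 1 (fun x => ∫ r in a..ρ x, G x r) := by
  have hρd : ∀ x, HasDerivAt ρ (deriv ρ x) x :=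
    fun x => (hρ.differentiable one_ne_zero x).hasDerivAt
  refine contDiff_one_iff_hasFDerivAt.2 ⟨_, ?_, fun x =>
    (hasDerivAt_intervalIntegral_param_upper hG hG₁ hGG₁ a (hρd x)).hasFDerivAt⟩
  refine ContinuousLinearMap.toSpanSingletonCLE.continuous.comp ?_
  exact (continuous_parametric_intervalIntegral_of_continuous hG₁ hρ.continuous).add
    ((hG.comp (continuous_id.prodMk hρ.continuous)).mul (hρ.continuous_deriv le_rfl))

theorem integral_param_eq_neg_boundary_of_integral_eq_zero (hG : Continuous (uncurry G))
    (hG₁ : Continuous (uncurry G₁)) (hGG₁ : ∀ x y, HasDerivAt (G · y) (G₁ x y) x)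
    (a : ℝ) {ρ : ℝ → ℝ} {ρ' x₀ : ℝ} (hρ : HasDerivAt ρ ρ' x₀)
    (hzero : ∀ x, ∫ r in a..ρ x, G x r = 0) :
    ∫ r in a..ρ x₀, G₁ x₀ r = -(G x₀ (ρ x₀) * ρ') := by
  have h := hasDerivAt_intervalIntegral_param_upper hG hG₁ hGG₁ a hρ
  simp only [hzero] at h
  linear_combination -(hasDerivAt_const x₀ (0 : ℝ)).unique h

end Leibniz

theorem integral_mul_id_eq_zero_of_radial_laplacian {ρ D : ℝ} (hρ : 0 < ρ) {W Q : ℝ → ℝ}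
    (hW : ContDiffOn ℝ 2 W (Ioc 0 ρ))
    (hlim : Tendsto (fun r => r * deriv W r) (𝓝[>] 0) (𝓝 0))
    (hneu : derivWithin W (Icc 0 ρ) ρ = 0)
    (hpde : ∀ r ∈ Ioo 0 ρ, D * (deriv (deriv W) r + (1 / r) * deriv W r) = Q r) :
    ∫ r in 0..ρ, Q r * r = 0 := by
  by_cases hQ : ¬IntervalIntegrable (fun r => Q r * r) volume 0 ρ
  · exact integral_undef hQ
  have hW' : ContDiffOn ℝ 1 (deriv W) (Ioo 0 ρ) :=
    (hW.mono Ioo_subset_Ioc_self).deriv_of_isOpen isOpen_Ioo (by norm_num)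
  have hderiv : ∀ r ∈ Ioo 0 ρ, HasDerivAt (fun r => D * (r * deriv W r)) (Q r * r) r := by
    intro r hr
    have hW'r : HasDerivAt (deriv W) (deriv (deriv W) r) r :=
      ((hW'.differentiableOn one_ne_zero r hr).differentiableAt
        (isOpen_Ioo.mem_nhds hr)).hasDerivAt
    refine (((hasDerivAt_id r).mul hW'r).const_mul D).congr_deriv ?_
    rw [← hpde r hr, id]
    field_simp [hr.1.ne']
    ring
  have hWρ : Tendsto (deriv W) (𝓝[<] ρ) (𝓝 0) := by
    have hmem : ρ ∈ Ioc 0 ρ := right_mem_Ioc.2 hρ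
    have hcont := hW.continuousOn_derivWithin (uniqueDiffOn_Ioc 0 ρ) one_le_two ρ hmem
    have hdiff : HasDerivWithinAt W (derivWithin W (Ioc 0 ρ) ρ) (Icc 0 ρ) ρ :=
      ((hW.differentiableOn two_ne_zero ρ hmem).hasDerivWithinAt).mono_of_mem_nhdsWithin
        (mem_nhdsWithin.2 ⟨Ioi 0, isOpen_Ioi, hρ, fun r hr => ⟨hr.1, hr.2.2⟩⟩)
    rw [← hneu, hdiff.derivWithin (uniqueDiffOn_Icc hρ ρ (right_mem_Icc.2 hρ.le)),
      ← nhdsWithin_Ioo_eq_nhdsLT hρ]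
    refine (hcont.mono_left (nhdsWithin_mono _ Ioo_subset_Ioc_self)).congr' ?_
    filter_upwards [self_mem_nhdsWithin] with r hr
    exact derivWithin_of_mem_nhds (mem_of_superset (isOpen_Ioo.mem_nhds hr) Ioo_subset_Ioc_self)
  have h := integral_eq_sub_of_hasDerivAt_of_tendsto hρ hderiv (not_not.1 hQ)
    (by simpa using hlim.const_mul D)
    (by simpa using ((tendsto_nhdsWithin_of_tendsto_nhds tendsto_id).mul hWρ).const_mul D)
  simpa using h

theorem radial_neumann_solvability {ρ D G K : ℝ} (hρ : 0 < ρ) {W T m : ℝ → ℝ}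
    (hW : ContDiffOn ℝ 2 W (Ioc 0 ρ))
    (hlim : Tendsto (fun r => r * deriv W r) (𝓝[>] 0) (𝓝 0))
    (hneu : derivWithin W (Icc 0 ρ) ρ = 0)
    (hT : IntervalIntegrable (fun r => T r * r) volume 0 ρ)
    (hm : IntervalIntegrable (fun r => m r * r) volume 0 ρ) (hm0 : ∫ r in 0..ρ, m r * r = 0)
    (hpde : ∀ r ∈ Ioo 0 ρ,
      D * (deriv (deriv W) r + (1 / r) * deriv W r) = T r + (G - K * m r)) :
    (∫ r in 0..ρ, T r * r) + G * (ρ ^ 2 / 2) = 0 := by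
  have h := integral_mul_id_eq_zero_of_radial_laplacian hρ hW hlim hneu hpde
  rw [integral_congr (f := fun r => (T r + (G - K * m r)) * r)
      (g := fun r => T r * r + (G * r - K * (m r * r))) fun r _ => by ring,
    integral_add hT ((intervalIntegrable_id.const_mul G).sub (hm.const_mul K)),
    integral_sub (intervalIntegrable_id.const_mul G) (hm.const_mul K),
    intervalIntegral.integral_const_mul, intervalIntegral.integral_const_mul, integral_id, hm0] at h
  linear_combination h

theorem integral_sub_avgR_mul_eq_zero {R : ℝ → ℝ → ℝ} {f : ℝ → ℝ → ℝ → ℝ} {x t : ℝ}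
    (hR : R x t ≠ 0) (hf : IntervalIntegrable (fun r => f x r t * r) volume 0 (R x t)) :
    ∫ r in 0..R x t, (f x r t - avgR R f x t) * r = 0 := by
  simp_rw [sub_mul]
  rw [intervalIntegral.integral_sub hf (intervalIntegrable_id.const_mul _),
    intervalIntegral.integral_const_mul, integral_id, avgR]
  field_simp
  ring

theorem integral_const_mul_sub_avgR_mul_eq_zero {R : ℝ → ℝ → ℝ} {f : ℝ → ℝ → ℝ → ℝ} {x t : ℝ}
    (c : ℝ) (hR : R x t ≠ 0) (hf : IntervalIntegrable (fun r => f x r t * r) volume 0 (R x t)) :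
    ∫ r in 0..R x t, c * (f x r t - avgR R f x t) * r = 0 := by
  simp_rw [mul_assoc]
  rw [intervalIntegral.integral_const_mul, integral_sub_avgR_mul_eq_zero hR hf, mul_zero]

theorem integral_mul_sub_avgR_comm (R : ℝ → ℝ → ℝ) {f g : ℝ → ℝ → ℝ → ℝ} {x t : ℝ}
    (hf : Continuous fun r => f x r t) (hg : Continuous fun r => g x r t) :
    ∫ r in 0..R x t, f x r t * (g x r t - avgR R g x t) * r
      = ∫ r in 0..R x t, (f x r t - avgR R f x t) * g x r t * r := by
  have hfg : IntervalIntegrable (fun r => f x r t * g x r t * r) volume 0 (R x t) :=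
    ((hf.mul hg).mul continuous_id).intervalIntegrable _ _
  have hf' : IntervalIntegrable (fun r => f x r t * r) volume 0 (R x t) :=
    (hf.mul continuous_id).intervalIntegrable _ _
  have hg' : IntervalIntegrable (fun r => g x r t * r) volume 0 (R x t) :=
    (hg.mul continuous_id).intervalIntegrable _ _
  have hl : ∀ r, f x r t * (g x r t - avgR R g x t) * r
      = f x r t * g x r t * r - avgR R g x t * (f x r t * r) := fun r => by ring
  have hr : ∀ r, (f x r t - avgR R f x t) * g x r t * r
      = f x r t * g x r t * r - avgR R f x t * (g x r t * r) := fun r => by ring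
  simp_rw [hl, hr]
  rw [intervalIntegral.integral_sub hfg (hf'.const_mul _),
    intervalIntegral.integral_sub hfg (hg'.const_mul _),
    intervalIntegral.integral_const_mul, intervalIntegral.integral_const_mul, avgR, avgR]
  ring

theorem contDiff_radialAverage {G : ℝ → ℝ → ℝ} (hG : ContDiff ℝ 1 (uncurry G)) {ρ : ℝ → ℝ}
    (hρ : ContDiff ℝ 1 ρ) (hρ0 : ∀ s, ρ s ≠ 0) :
    ContDiff ℝ 1 fun s => 2 / ρ s ^ 2 * ∫ r in 0..ρ s, G s r * r := by
  refine (contDiff_const.div (hρ.pow 2) fun s => pow_ne_zero 2 (hρ0 s)).mul ?_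
  exact contDiff_intervalIntegral_param_upper (G := fun s r => G s r * r)
    (G₁ := fun s r => deriv (G · r) s * r) (hG.continuous.mul continuous_snd)
    (hG.continuous_deriv_fst.mul continuous_snd)
    (fun s r => (hG.hasDerivAt_deriv_fst s r).mul_const r) 0 hρ

section Slices

variable {f : ℝ → ℝ → ℝ → ℝ}

theorem ContDiff.uncurry_fix_third (hf : ContDiff ℝ 1 fun p : ℝ × ℝ × ℝ => f p.1 p.2.1 p.2.2)
    (t : ℝ) : ContDiff ℝ 1 (uncurry fun x r => f x r t) :=
  hf.comp (contDiff_fst.prodMk (contDiff_snd.prodMk contDiff_const))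

theorem ContDiff.uncurry_swap_fix_first
    (hf : ContDiff ℝ 1 fun p : ℝ × ℝ × ℝ => f p.1 p.2.1 p.2.2) (x : ℝ) :
    ContDiff ℝ 1 (uncurry fun t r => f x r t) :=
  hf.comp (contDiff_const.prodMk (contDiff_snd.prodMk contDiff_fst))

theorem ContDiff.fix_first_third (hf : ContDiff ℝ 1 fun p : ℝ × ℝ × ℝ => f p.1 p.2.1 p.2.2)
    (x t : ℝ) : ContDiff ℝ 1 fun r => f x r t :=
  (hf.uncurry_fix_third t).comp (contDiff_const.prodMk contDiff_id)

end Slices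

theorem contDiff_uncurry_mul_sub_avgR_fix_third {R c : ℝ → ℝ → ℝ} {f : ℝ → ℝ → ℝ → ℝ}
    (hR : ContDiff ℝ 1 (fun p : ℝ × ℝ => R p.1 p.2)) (hR0 : ∀ x t, R x t ≠ 0)
    (hc : ContDiff ℝ 1 (fun p : ℝ × ℝ => c p.1 p.2))
    (hf : ContDiff ℝ 1 (fun p : ℝ × ℝ × ℝ => f p.1 p.2.1 p.2.2)) (t : ℝ) :
    ContDiff ℝ 1 (uncurry fun x r => c x t * (f x r t - avgR R f x t)) := by
  have havg : ContDiff ℝ 1 fun x => avgR R f x t := contDiff_radialAverage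
    (hf.uncurry_fix_third t) (hR.comp (contDiff_id.prodMk contDiff_const)) (hR0 · t)
  exact (hc.comp (contDiff_fst.prodMk contDiff_const)).mul
    ((hf.uncurry_fix_third t).sub (havg.comp contDiff_fst))

theorem contDiff_uncurry_mul_sub_avgR_swap_fix_first {R c : ℝ → ℝ → ℝ} {f : ℝ → ℝ → ℝ → ℝ}
    (hR : ContDiff ℝ 1 (fun p : ℝ × ℝ => R p.1 p.2)) (hR0 : ∀ x t, R x t ≠ 0)
    (hc : ContDiff ℝ 1 (fun p : ℝ × ℝ => c p.1 p.2))
    (hf : ContDiff ℝ 1 (fun p : ℝ × ℝ × ℝ => f p.1 p.2.1 p.2.2)) (x : ℝ) :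
    ContDiff ℝ 1 (uncurry fun t r => c x t * (f x r t - avgR R f x t)) := by
  have havg : ContDiff ℝ 1 fun t => avgR R f x t := contDiff_radialAverage
    (hf.uncurry_swap_fix_first x) (hR.comp (contDiff_const.prodMk contDiff_id)) (hR0 x)
  exact (hc.comp (contDiff_const.prodMk contDiff_fst)).mul
    ((hf.uncurry_swap_fix_first x).sub (havg.comp contDiff_fst))

theorem integral_mul_mul_id_eq_of_incompressible {ρ : ℝ} (hρ : 0 ≤ ρ) {u V g : ℝ → ℝ}
    (hu : ContDiff ℝ 1 u) (hV : ContDiff ℝ 1 V)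
    (hdiv : ∀ r ∈ Ioo 0 ρ, deriv (fun r => r * V r) r + r * g r = 0) :
    ∫ r in 0..ρ, u r * g r * r = -(u ρ * (ρ * V ρ)) + ∫ r in 0..ρ, V r * deriv u r * r := by
  have hw : ContDiff ℝ 1 fun r => r * V r := contDiff_id.mul hV
  have hparts := integral_mul_deriv_eq_deriv_mul (a := 0) (b := ρ)
    (fun r _ => (hu.differentiable one_ne_zero r).hasDerivAt)
    (fun r _ => (hw.differentiable one_ne_zero r).hasDerivAt)
    ((hu.continuous_deriv le_rfl).intervalIntegrable _ _)
    ((hw.continuous_deriv le_rfl).intervalIntegrable _ _)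
  have hflux : ∫ r in 0..ρ, u r * g r * r = -∫ r in 0..ρ, u r * deriv (fun r => r * V r) r := by
    rw [← intervalIntegral.integral_neg]
    exact integral_congr_Ioo_of_le hρ fun r hr => by linear_combination u r * hdiv r hr
  have hswap : ∫ r in 0..ρ, deriv u r * (r * V r) = ∫ r in 0..ρ, V r * deriv u r * r :=
    integral_congr fun r _ => by ring
  rw [hflux, hparts, hswap]
  ring

theorem intervalIntegrable_transport_mul_id {Vx Vr u : ℝ → ℝ → ℝ → ℝ} {x t : ℝ}
    (hVx : ContDiff ℝ 1 (uncurry fun x' r => Vx x' r t))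
    (hVr : ContDiff ℝ 1 fun r => Vr x r t)
    (hux : ContDiff ℝ 1 (uncurry fun x' r => u x' r t))
    (hut : ContDiff ℝ 1 (uncurry fun t' r => u x r t')) (a b : ℝ) :
    IntervalIntegrable (fun r => (deriv (fun t' => u x r t') t
        + Vx x r t * deriv (fun x' => u x' r t) x
        + Vr x r t * deriv (fun r' => u x r' t) r) * r) volume a b :=
  ((((hut.continuous_deriv_fst_apply t).add
    ((hVx.continuous.comp (continuous_const.prodMk continuous_id)).mul
      (hux.continuous_deriv_fst_apply x))).add
    (hVr.continuous.mul (hux.continuous_deriv_snd_apply x))).mul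
      continuous_id).intervalIntegrable _ _

theorem integral_transport_mul_eq_deriv_flux {R : ℝ → ℝ → ℝ} {Vx Vr u : ℝ → ℝ → ℝ → ℝ}
    {x t : ℝ} (hR0 : 0 ≤ R x t)
    (hRx : DifferentiableAt ℝ (fun x' => R x' t) x)
    (hRt : DifferentiableAt ℝ (fun t' => R x t') t)
    (hVx : ContDiff ℝ 1 (uncurry fun x' r => Vx x' r t))
    (hVr : ContDiff ℝ 1 fun r => Vr x r t)
    (hux : ContDiff ℝ 1 (uncurry fun x' r => u x' r t))
    (hut : ContDiff ℝ 1 (uncurry fun t' r => u x r t'))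
    (hmean : ∀ t', ∫ r in 0..R x t', u x r t' * r = 0)
    (hincomp : ∀ r ∈ Ioo 0 (R x t),
      deriv (fun r' => r' * Vr x r' t) r + r * deriv (fun x' => Vx x' r t) x = 0)
    (hstream : deriv (fun t' => R x t') t + Vx x (R x t) t * deriv (fun x' => R x' t) x
        = Vr x (R x t) t) :
    ∫ r in 0..R x t, (deriv (fun t' => u x r t') t + Vx x r t * deriv (fun x' => u x' r t) x
        + Vr x r t * deriv (fun r' => u x r' t) r) * r
      = deriv (fun x' => ∫ r in 0..R x' t, u x' r t * Vx x' r t * r) x := by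
  set ρ := R x t
  have hur : ContDiff ℝ 1 fun r => u x r t := hux.comp (contDiff_const.prodMk contDiff_id)
  have htime : ∫ r in 0..ρ, deriv (fun t' => u x r t') t * r
      = -(u x ρ t * ρ * deriv (fun t' => R x t') t) :=
    integral_param_eq_neg_boundary_of_integral_eq_zero (G := fun t' r => u x r t' * r)
      (G₁ := fun t' r => deriv (fun t'' => u x r t'') t' * r)
      (hut.continuous.mul continuous_snd) (hut.continuous_deriv_fst.mul continuous_snd)
      (fun t' r => (hut.hasDerivAt_deriv_fst t' r).mul_const r) 0 hRt.hasDerivAt hmean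
  have hflux := hasDerivAt_intervalIntegral_param_upper
    (G := fun x' r => u x' r t * Vx x' r t * r)
    (G₁ := fun x' r => (Vx x' r t * deriv (fun x'' => u x'' r t) x'
      + u x' r t * deriv (fun x'' => Vx x'' r t) x') * r)
    ((hux.continuous.mul hVx.continuous).mul continuous_snd)
    (((hVx.continuous.mul hux.continuous_deriv_fst).add
      (hux.continuous.mul hVx.continuous_deriv_fst)).mul continuous_snd)
    (fun x' r => (((hux.hasDerivAt_deriv_fst x' r).mul (hVx.hasDerivAt_deriv_fst x' r)).mul_const
      r).congr_deriv (by ring))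
    0 hRx.hasDerivAt
  have hstretch := integral_mul_mul_id_eq_of_incompressible hR0 hur hVr hincomp
  have cVx : Continuous fun r => Vx x r t :=
    hVx.continuous.comp (continuous_const.prodMk continuous_id)
  have htime_int : IntervalIntegrable (fun r => deriv (fun t' => u x r t') t * r) volume 0 ρ :=
    ((hut.continuous_deriv_fst_apply t).mul continuous_id).intervalIntegrable _ _
  have hadv_int :
      IntervalIntegrable (fun r => Vx x r t * deriv (fun x' => u x' r t) x * r) volume 0 ρ :=
    ((cVx.mul (hux.continuous_deriv_fst_apply x)).mul continuous_id).intervalIntegrable _ _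
  have hrad_int :
      IntervalIntegrable (fun r => Vr x r t * deriv (fun r' => u x r' t) r * r) volume 0 ρ :=
    ((hVr.continuous.mul (hux.continuous_deriv_snd_apply x)).mul
      continuous_id).intervalIntegrable _ _
  have hstretch_int :
      IntervalIntegrable (fun r => u x r t * deriv (fun x' => Vx x' r t) x * r) volume 0 ρ :=
    ((hur.continuous.mul (hVx.continuous_deriv_fst_apply x)).mul
      continuous_id).intervalIntegrable _ _
  rw [hflux.deriv]
  simp only [add_mul]
  rw [integral_add (htime_int.add hadv_int) hrad_int, integral_add htime_int hadv_int,
    integral_add hadv_int hstretch_int, htime, hstretch]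
  linear_combination (-(u x ρ t * ρ)) * hstream

theorem solvability_condition_G2_general
    (D : ℝ)
    (R : ℝ → ℝ → ℝ) (hRpos : ∀ x t, 0 < R x t)
    (hRsm : ContDiff ℝ 1 (fun p : ℝ × ℝ => R p.1 p.2))
    (Vx Vr η W₂ : ℝ → ℝ → ℝ → ℝ) (c₁ G₂ : ℝ → ℝ → ℝ)
    (hVx : ContDiff ℝ 1 (fun p : ℝ × ℝ × ℝ => Vx p.1 p.2.1 p.2.2))
    (hVr : ContDiff ℝ 1 (fun p : ℝ × ℝ × ℝ => Vr p.1 p.2.1 p.2.2))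
    (hincomp : ∀ x t r, 0 < r → r < R x t →
      deriv (fun r' => r' * Vr x r' t) r + r * deriv (fun x' => Vx x' r t) x = 0)
    (hstream : ∀ x t,
      deriv (fun t' => R x t') t + Vx x (R x t) t * deriv (fun x' => R x' t) x
        = Vr x (R x t) t)
    (hη1 : ContDiff ℝ 1 (fun p : ℝ × ℝ × ℝ => η p.1 p.2.1 p.2.2))
    (hc₁ : ContDiff ℝ 1 (fun p : ℝ × ℝ => c₁ p.1 p.2))
    (hW₂smooth : ∀ x t, ContDiffOn ℝ 2 (fun r => W₂ x r t) (Set.Ioc 0 (R x t)))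
    (hW₂lim : ∀ x t, Tendsto (fun r => r * deriv (fun r' => W₂ x r' t) r)
      (𝓝[>] 0) (𝓝 0))
    (hW₂neu : ∀ x t,
      derivWithin (fun r' => W₂ x r' t) (Set.Icc 0 (R x t)) (R x t) = 0)
    (hpde : ∀ x t r, 0 < r → r < R x t →
      D * (deriv (deriv (fun r' => W₂ x r' t)) r
          + (1 / r) * deriv (fun r' => W₂ x r' t) r)
        = deriv (fun t' => c₁ x t' * (η x r t' - avgR R η x t')) t
          + G₂ x t
          - (η x r t - avgR R η x t) * deriv (fun x' => c₁ x' t * avgR R Vx x' t) x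
          + Vx x r t * deriv (fun x' => c₁ x' t * (η x' r t - avgR R η x' t)) x
          + Vr x r t * c₁ x t * deriv (fun r' => η x r' t - avgR R η x t) r) :
    ∀ x t, G₂ x t = -(1 / (R x t) ^ 2) *
      deriv (fun x' => c₁ x' t *
        (2 * ∫ r in (0:ℝ)..(R x' t),
          η x' r t * (Vx x' r t - avgR R Vx x' t) * r)) x := by
  intro x t
  have hR0 : ∀ x t, R x t ≠ 0 := fun x t => (hRpos x t).ne'
  have hη : ∀ x' t', Continuous fun r => η x' r t' :=
    fun x' t' => (hη1.fix_first_third x' t').continuous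
  have hux := contDiff_uncurry_mul_sub_avgR_fix_third hRsm hR0 hc₁ hη1 t
  have hut := contDiff_uncurry_mul_sub_avgR_swap_fix_first hRsm hR0 hc₁ hη1 x
  have htransport := integral_transport_mul_eq_deriv_flux
    (u := fun x r t => c₁ x t * (η x r t - avgR R η x t)) (hRpos x t).le
    ((hRsm.comp (contDiff_id.prodMk contDiff_const)).differentiable one_ne_zero x)
    ((hRsm.comp (contDiff_const.prodMk contDiff_id)).differentiable one_ne_zero t)
    (hVx.uncurry_fix_third t) (hVr.fix_first_third x t) hux hut
    (fun t' => integral_const_mul_sub_avgR_mul_eq_zero _ (hR0 x t')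
      (((hη x t').mul continuous_id).intervalIntegrable _ _))
    (fun r hr => hincomp x t r hr.1 hr.2) (hstream x t)
  have hsolv := radial_neumann_solvability (D := D) (G := G₂ x t)
    (K := deriv (fun x' => c₁ x' t * avgR R Vx x' t) x) (m := fun r => η x r t - avgR R η x t)
    (hRpos x t) (hW₂smooth x t) (hW₂lim x t) (hW₂neu x t) (intervalIntegrable_transport_mul_id
      (u := fun x r t => c₁ x t * (η x r t - avgR R η x t)) (hVx.uncurry_fix_third t)
      (hVr.fix_first_third x t) hux hut 0 (R x t))
    ((((hη x t).sub continuous_const).mul continuous_id).intervalIntegrable _ _)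
    (integral_sub_avgR_mul_eq_zero (hR0 x t) (((hη x t).mul continuous_id).intervalIntegrable _ _))
    fun r hr => by rw [hpde x t r hr.1 hr.2, deriv_const_mul_field]; ring
  rw [htransport] at hsolv
  have hflux : (fun x' => c₁ x' t *
        (2 * ∫ r in 0..R x' t, η x' r t * (Vx x' r t - avgR R Vx x' t) * r))
      = fun x' => 2 * ∫ r in 0..R x' t, c₁ x' t * (η x' r t - avgR R η x' t) * Vx x' r t * r := by
    funext x'
    rw [integral_mul_sub_avgR_comm R (hη x' t) (hVx.fix_first_third x' t).continuous,
      mul_left_comm, ← intervalIntegral.integral_const_mul]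
    simp only [mul_assoc]
  rw [hflux, deriv_const_mul_field]
  field_simp [hR0 x t]
  linear_combination 2 * hsolv

/-- Solvability condition determining the second-order coefficient `G₂`.
Under the incompressibility and streamline conditions, if there is `W₂` (C² in `r` on
`(0, R]`, with `r ∂_r W₂ → 0` as `r → 0⁺` and `∂_r W₂(x,R,t) = 0`) such that
`D (∂²_r W₂ + (1/r) ∂_r W₂) = ∂_t(c₁ η̃) + G₂ - η̃ ∂ₓ(c₁ ⟨Vx⟩) + Vx ∂ₓ(c₁ η̃) + Vr c₁ ∂_r η̃`
for `0 < r < R(x,t)`, where `η̃ := η - ⟨η⟩` and `Ṽx := Vx - ⟨Vx⟩`, then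
`G₂(x,t) = -(1/R²) ∂ₓ ( c₁ ⟨R² η Ṽx⟩ )` with `⟨R² η Ṽx⟩ = 2 ∫₀ᴿ η Ṽx r dr`. -/
theorem solvability_condition_G2
    (D : ℝ) (hD : 0 < D)
    (R : ℝ → ℝ → ℝ) (hRpos : ∀ x t, 0 < R x t)
    (hRsm : ContDiff ℝ 1 (fun p : ℝ × ℝ => R p.1 p.2))
    (Vx Vr η W₂ : ℝ → ℝ → ℝ → ℝ) (c₁ G₂ : ℝ → ℝ → ℝ)
    (hVx : ContDiff ℝ 1 (fun p : ℝ × ℝ × ℝ => Vx p.1 p.2.1 p.2.2))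
    (hVr : ContDiff ℝ 1 (fun p : ℝ × ℝ × ℝ => Vr p.1 p.2.1 p.2.2))
    (hincomp : ∀ x t r, 0 < r → r < R x t →
      deriv (fun r' => r' * Vr x r' t) r + r * deriv (fun x' => Vx x' r t) x = 0)
    (hstream : ∀ x t,
      deriv (fun t' => R x t') t + Vx x (R x t) t * deriv (fun x' => R x' t) x
        = Vr x (R x t) t)
    (hη1 : ContDiff ℝ 1 (fun p : ℝ × ℝ × ℝ => η p.1 p.2.1 p.2.2))
    (hη2 : ∀ x t, ContDiff ℝ 2 (fun r => η x r t))
    (hc₁ : ContDiff ℝ 1 (fun p : ℝ × ℝ => c₁ p.1 p.2))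
    (hG₂ : Continuous (fun p : ℝ × ℝ => G₂ p.1 p.2))
    (hW₂smooth : ∀ x t, ContDiffOn ℝ 2 (fun r => W₂ x r t) (Set.Ioc 0 (R x t)))
    (hW₂lim : ∀ x t, Tendsto (fun r => r * deriv (fun r' => W₂ x r' t) r)
      (𝓝[>] 0) (𝓝 0))
    (hW₂neu : ∀ x t,
      derivWithin (fun r' => W₂ x r' t) (Set.Icc 0 (R x t)) (R x t) = 0)
    (hpde : ∀ x t r, 0 < r → r < R x t →
      D * (deriv (deriv (fun r' => W₂ x r' t)) r
          + (1 / r) * deriv (fun r' => W₂ x r' t) r)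
        = deriv (fun t' => c₁ x t' * (η x r t' - avgR R η x t')) t
          + G₂ x t
          - (η x r t - avgR R η x t) * deriv (fun x' => c₁ x' t * avgR R Vx x' t) x
          + Vx x r t * deriv (fun x' => c₁ x' t * (η x' r t - avgR R η x' t)) x
          + Vr x r t * c₁ x t * deriv (fun r' => η x r' t - avgR R η x t) r) :
    ∀ x t, G₂ x t = -(1 / (R x t) ^ 2) *
      deriv (fun x' => c₁ x' t *
        (2 * ∫ r in (0:ℝ)..(R x' t),
          η x' r t * (Vx x' r t - avgR R Vx x' t) * r)) x :=
  solvability_condition_G2_general D R hRpos hRsm Vx Vr η W₂ c₁ G₂ hVx hVr hincomp hstream hη1 hc₁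
    hW₂smooth hW₂lim hW₂neu hpde
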